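/- arXiv:2309.01110 — 3 statements merged into one kernel-verified Lean document; each statement's English description precedes it below -/
import Mathlib

section
/- Every permutation of {1,…,n} can be partitioned into at most 2⌈√n⌉ monotone subsequences, i.e., the index set {1,…,n} can be partitioned into at most 2⌈√n⌉ blocks such that π is monotone (increasing or decreasing) on each block. -/
/-!
Erdős–Szekeres via longest increasing runs: label each `i ∈ S` by the length of the longest
increasing subsequence ending at `i`. The label strictly grows along every increasing pair, so if
all labels are at most `r`, each of the `r` level sets is decreasing and one of them has more than
`s` elements when `r * s < #S`.

Hence a set of size greater than `t²` contains a monotone subset of size `t + 1`. Removing such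
subsets while more than `t²` elements remain takes at most two steps out of `(t + 1)²` elements,
so by induction on `t` a set of size at most `t²` splits into `2t` monotone blocks; apply this
with `t = ⌈√n⌉`.
-/

open Finset

section

variable {ι α : Type*} [LinearOrder ι] [LinearOrder α] {f : ι → α} {S T : Finset ι} {i j : ι}
  {k l : ℕ}

open Classical in
noncomputable def increasingSubsetsEndingAt (f : ι → α) (S : Finset ι) (i : ι) :
    Finset (Finset ι) :=
  S.powerset.filter fun T : Finset ι => i ∈ T ∧ (∀ x ∈ T, x ≤ i) ∧ StrictMonoOn f ↑T

lemma mem_increasingSubsetsEndingAt :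
    T ∈ increasingSubsetsEndingAt f S i ↔
      T ⊆ S ∧ i ∈ T ∧ (∀ x ∈ T, x ≤ i) ∧ StrictMonoOn f ↑T := by
  simp [increasingSubsetsEndingAt]

lemma singleton_mem_increasingSubsetsEndingAt (hi : i ∈ S) :
    {i} ∈ increasingSubsetsEndingAt f S i := by
  simp [mem_increasingSubsetsEndingAt, hi]

noncomputable def longestIncreasingEndingAt (f : ι → α) (S : Finset ι) (i : ι) : ℕ :=
  (increasingSubsetsEndingAt f S i).sup card

lemma exists_card_eq_longestIncreasingEndingAt (hi : i ∈ S) :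
    ∃ T ∈ increasingSubsetsEndingAt f S i, #T = longestIncreasingEndingAt f S i := by
  obtain ⟨T, hT, hcard⟩ :=
    exists_mem_eq_sup _ ⟨_, singleton_mem_increasingSubsetsEndingAt (f := f) hi⟩ card
  exact ⟨T, hT, hcard.symm⟩

lemma one_le_longestIncreasingEndingAt (hi : i ∈ S) : 1 ≤ longestIncreasingEndingAt f S i :=
  le_sup (f := card) (singleton_mem_increasingSubsetsEndingAt hi)

lemma longestIncreasingEndingAt_lt (hi : i ∈ S) (hj : j ∈ S) (hij : i < j) (hf : f i < f j) :
    longestIncreasingEndingAt f S i < longestIncreasingEndingAt f S j := by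
  obtain ⟨T, hT, hcard⟩ := exists_card_eq_longestIncreasingEndingAt (f := f) hi
  rw [mem_increasingSubsetsEndingAt] at hT
  obtain ⟨hTS, hiT, hle, hmono⟩ := hT
  have hjT : j ∉ T := fun h => (hle j h).not_gt hij
  have hins : insert j T ∈ increasingSubsetsEndingAt f S j := by
    refine mem_increasingSubsetsEndingAt.2 ⟨insert_subset hj hTS, mem_insert_self _ _,
      ?_, ?_⟩
    · simp only [mem_insert, forall_eq_or_imp, le_refl, true_and]
      exact fun x hx => (hle x hx).trans hij.le
    · simp only [StrictMonoOn, coe_insert, Set.mem_insert_iff, mem_coe]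
      rintro x (rfl | hx) y (rfl | hy) hxy
      · exact absurd hxy (lt_irrefl _)
      · exact absurd (hxy.trans_le (hle y hy)) hij.not_gt
      · exact (hmono.monotoneOn hx hiT (hle x hx)).trans_lt hf
      · exact hmono hx hy hxy
  calc longestIncreasingEndingAt f S i < #(insert j T) := by
        rw [card_insert_of_notMem hjT, hcard]; omega
    _ ≤ _ := le_sup (f := card) hins

theorem exists_strictMonoOn_or_strictAntiOn_of_mul_lt_card {r s : ℕ} (hf : Set.InjOn f S)
    (h : r * s < #S) :
    (∃ T ⊆ S, r < #T ∧ StrictMonoOn f T) ∨ ∃ T ⊆ S, s < #T ∧ StrictAntiOn f T := by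
  by_cases hlong : ∃ i ∈ S, r < longestIncreasingEndingAt f S i
  · obtain ⟨i, hi, hr⟩ := hlong
    obtain ⟨T, hT, hcard⟩ := exists_card_eq_longestIncreasingEndingAt (f := f) hi
    rw [mem_increasingSubsetsEndingAt] at hT
    exact Or.inl ⟨T, hT.1, hcard ▸ hr, hT.2.2.2⟩
  push Not at hlong
  obtain ⟨l, -, hl⟩ := exists_lt_card_fiber_of_mul_lt_card_of_maps_to
    (f := longestIncreasingEndingAt f S) (t := Icc 1 r) (n := s)
    (fun i hi => mem_Icc.2 ⟨one_le_longestIncreasingEndingAt hi, hlong i hi⟩)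
    (by simpa using h)
  refine Or.inr ⟨_, filter_subset _ _, hl, fun x hx y hy hxy => ?_⟩
  simp only [coe_filter, Set.mem_ofPred_eq] at hx hy
  refine (hf.ne hx.1 hy.1 hxy.ne).lt_or_gt.resolve_left fun hfxy => ?_
  have := longestIncreasingEndingAt_lt hx.1 hy.1 hxy hfxy
  omega


def HasMonotonePartition (f : ι → α) (S : Finset ι) (k : ℕ) : Prop :=
  ∃ c : ι → ℕ, (∀ i ∈ S, c i < k) ∧
    ∀ j, StrictMonoOn f {i | i ∈ S ∧ c i = j} ∨ StrictAntiOn f {i | i ∈ S ∧ c i = j}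

lemma hasMonotonePartition_empty : HasMonotonePartition f ∅ 0 :=
  ⟨fun _ => 0, by simp, fun _ => Or.inl (Set.Subsingleton.strictMonoOn f (by simp))⟩

lemma HasMonotonePartition.mono (h : HasMonotonePartition f S k) (hkl : k ≤ l) :
    HasMonotonePartition f S l :=
  let ⟨c, hc, hmono⟩ := h
  ⟨c, fun i hi => (hc i hi).trans_le hkl, hmono⟩

lemma HasMonotonePartition.of_sdiff (hT : StrictMonoOn f T ∨ StrictAntiOn f T)
    (h : HasMonotonePartition f (S \ T) k) : HasMonotonePartition f S (k + 1) := by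
  obtain ⟨c, hc, hmono⟩ := h
  refine ⟨fun i => if i ∈ T then k else c i, fun i hi => ?_, fun j => ?_⟩
  · by_cases hiT : i ∈ T
    · simp [hiT]
    · simpa [hiT] using (hc i (mem_sdiff.2 ⟨hi, hiT⟩)).trans (Nat.lt_succ_self k)
  by_cases hj : j = k
  · subst hj
    have hsub : {i | i ∈ S ∧ (if i ∈ T then j else c i) = j} ⊆ T := by
      rintro i ⟨hi, hci⟩
      by_cases hiT : i ∈ T
      · exact hiT
      rw [if_neg hiT] at hci
      exact absurd hci (hc i (mem_sdiff.2 ⟨hi, hiT⟩)).ne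
    exact hT.imp (·.mono hsub) (·.mono hsub)
  · have hsub : {i | i ∈ S ∧ (if i ∈ T then k else c i) = j} ⊆ {i | i ∈ S \ T ∧ c i = j} := by
      rintro i ⟨hi, hci⟩
      by_cases hiT : i ∈ T
      · rw [if_pos hiT] at hci
        exact absurd hci.symm hj
      · rw [if_neg hiT] at hci
        exact ⟨mem_sdiff.2 ⟨hi, hiT⟩, hci⟩
    exact (hmono j).imp (·.mono hsub) (·.mono hsub)

lemma exists_monotone_subset_of_sq_lt_card (hf : Set.InjOn f S) {t : ℕ} (h : t * t < #S) :
    ∃ T ⊆ S, t < #T ∧ (StrictMonoOn f T ∨ StrictAntiOn f T) := by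
  rcases exists_strictMonoOn_or_strictAntiOn_of_mul_lt_card hf h with
    ⟨T, hTS, hcard, hT⟩ | ⟨T, hTS, hcard, hT⟩
  · exact ⟨T, hTS, hcard, Or.inl hT⟩
  · exact ⟨T, hTS, hcard, Or.inr hT⟩

lemma hasMonotonePartition_of_card_le_sq_add {t p : ℕ}
    (hbase : ∀ S : Finset ι, Set.InjOn f S → #S ≤ t * t → HasMonotonePartition f S p) (m : ℕ) :
    ∀ S : Finset ι, Set.InjOn f S → #S ≤ t * t + m * (t + 1) →
      HasMonotonePartition f S (p + m) := by
  induction m with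
  | zero => simpa using hbase
  | succ m ih =>
    intro S hf hS
    by_cases hsmall : #S ≤ t * t
    · exact (hbase S hf hsmall).mono (by omega)
    obtain ⟨T, hTS, hT, hmono⟩ := exists_monotone_subset_of_sq_lt_card hf (not_le.1 hsmall)
    refine .of_sdiff hmono (ih _ (hf.mono (coe_subset.2 sdiff_subset)) ?_)
    rw [card_sdiff_of_subset hTS]
    rw [add_mul] at hS
    omega

theorem hasMonotonePartition_of_card_le_sq (t : ℕ) :
    ∀ S : Finset ι, Set.InjOn f S → #S ≤ t * t → HasMonotonePartition f S (2 * t) := by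
  induction t with
  | zero =>
    intro S _ hS
    rw [Nat.mul_zero, Nat.le_zero, card_eq_zero] at hS
    exact hS ▸ hasMonotonePartition_empty
  | succ t ih =>
    intro S hf hS
    exact hasMonotonePartition_of_card_le_sq_add ih 2 S hf (by nlinarith)

end

lemma le_ceil_sqrt_mul_self (n : ℕ) : n ≤ ⌈Real.sqrt n⌉₊ * ⌈Real.sqrt n⌉₊ := by
  have h : Real.sqrt n ≤ ⌈Real.sqrt n⌉₊ := Nat.le_ceil _
  rw [Real.sqrt_le_left (by positivity), sq] at h
  exact_mod_cast h

/-- Every permutation of `{1,…,n}` can be partitioned into at most `2⌈√n⌉`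
monotone subsequences. -/
theorem stmt_1 (n : ℕ) (π : Equiv.Perm (Fin n)) :
    ∃ (k : ℕ) (c : Fin n → Fin k), k ≤ 2 * ⌈Real.sqrt n⌉₊ ∧
      ∀ j : Fin k, StrictMonoOn π {i | c i = j} ∨ StrictAntiOn π {i | c i = j} := by
  obtain ⟨c, hc, hmono⟩ := hasMonotonePartition_of_card_le_sq (f := π) ⌈Real.sqrt n⌉₊ univ
    (π.injective.injOn) (by simpa using le_ceil_sqrt_mul_self n)
  refine ⟨_, fun i => ⟨c i, hc i (mem_univ i)⟩, le_rfl, fun j => ?_⟩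
  have hsub : {i | (⟨c i, hc i (mem_univ i)⟩ : Fin _) = j} ⊆ {i | i ∈ univ ∧ c i = j} :=
    fun i hi => ⟨mem_univ i, congrArg Fin.val hi⟩
  exact (hmono j).imp (·.mono hsub) (·.mono hsub)
end

section
/- If every remaining sequence of m distinct numbers contains a monotone subsequence of length at least √m, then iteratively removing a longest monotone subsequence from a permutation of {1,…,n} terminates after at most 2√n iterations. -/
/-- If a process on a set of initial size `n` removes, at each step from a nonempty
current set of size `m`, at least `⌈√m⌉` elements, then it terminates after at most
`2√n` steps. -/
theorem stmt_2 {α : Type*} [DecidableEq α] (n : ℕ) (S : ℕ → Finset α)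
    (h0 : (S 0).card = n)
    (hsub : ∀ i, S (i + 1) ⊆ S i)
    (hrem : ∀ i, (S i).Nonempty →
      (S (i + 1)).card + ⌈Real.sqrt ((S i).card)⌉₊ ≤ (S i).card)
    (t : ℕ) (ht : ∀ i < t, (S i).Nonempty) :
    (t : ℝ) ≤ 2 * Real.sqrt n := by
  have key : ∀ i ≤ t, Real.sqrt ((S i).card) ≤ Real.sqrt n - i / 2 := by
    intro i hi
    induction i with
    | zero => simp [h0]
    | succ i ih =>
      have hi' : i < t := Nat.lt_of_succ_le hi
      have ih' := ih (Nat.le_of_lt hi')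
      have hne := ht i hi'
      have h1 : (1 : ℝ) ≤ (S i).card := by
        exact_mod_cast Finset.card_pos.mpr hne
      set m : ℝ := ((S i).card : ℝ) with hm
      have hsq1 : (1 : ℝ) ≤ Real.sqrt m := by
        rw [show (1:ℝ) = Real.sqrt 1 by simp]
        exact Real.sqrt_le_sqrt h1
      have hceil : Real.sqrt m ≤ (⌈Real.sqrt m⌉₊ : ℝ) := Nat.le_ceil _
      have hrem' := hrem i hne
      have hcard : ((S (i+1)).card : ℝ) ≤ m - Real.sqrt m := by
        have : ((S (i+1)).card : ℝ) + (⌈Real.sqrt m⌉₊ : ℝ) ≤ m := by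
          rw [hm]; exact_mod_cast hrem'
        linarith
      have hsqm : Real.sqrt m * Real.sqrt m = m := by
        exact Real.mul_self_sqrt (by linarith)
      have hstep : ((S (i+1)).card : ℝ) ≤ (Real.sqrt m - 1/2)^2 := by
        nlinarith
      have : Real.sqrt ((S (i+1)).card) ≤ Real.sqrt m - 1/2 := by
        calc Real.sqrt ((S (i+1)).card) ≤ Real.sqrt ((Real.sqrt m - 1/2)^2) :=
              Real.sqrt_le_sqrt hstep
          _ = Real.sqrt m - 1/2 := Real.sqrt_sq (by linarith)
      push_cast
      linarith
  have h0' : (0 : ℝ) ≤ Real.sqrt ((S t).card) := Real.sqrt_nonneg _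
  have := key t le_rfl
  linarith
end

section
/- Let opt_M(π) denote the minimum number of monotone blocks in a partition of {1,…,n} for a permutation π, and let opt_R(π) denote the minimum k such that {1,…,n} can be partitioned into k blocks each of which becomes monotone for π after deleting at most 2 elements (at most one from each 'end'). Then opt_R(π) ≤ opt_M(π) ≤ opt_R(π) + 2⌈√(2·opt_R(π))⌉. -/
/-- `π` is monotone on `S`. -/
def monoOn {n : ℕ} (π : Equiv.Perm (Fin n)) (S : Set (Fin n)) : Prop :=
  StrictMonoOn π S ∨ StrictAntiOn π S

/-- Minimum number of blocks in a partition of `{1,…,n}` into monotone subsequences of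
`π`. -/
noncomputable def optM (n : ℕ) (π : Equiv.Perm (Fin n)) : ℕ :=
  sInf {k : ℕ | ∃ c : Fin n → Fin k, ∀ j : Fin k, monoOn π {i | c i = j}}

/-- Minimum number of blocks in a partition of `{1,…,n}` into blocks each of which
becomes monotone for `π` after deleting at most 2 elements. -/
noncomputable def optR (n : ℕ) (π : Equiv.Perm (Fin n)) : ℕ :=
  sInf {k : ℕ | ∃ c : Fin n → Fin k, ∀ j : Fin k, ∃ D : Finset (Fin n),
    D.card ≤ 2 ∧ monoOn π ({i | c i = j} \ ↑D)}

/-!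
Deleting the at most two exceptional elements of every block turns a relaxed partition into `k`
blocks into a monotone partition of everything except a set `T` of at most `2k ≤ s²` elements,
where `s = ⌈√(2k)⌉`. Such a `T` splits into `2s` monotone blocks: greedily remove increasing
subsequences of length `s + 1` (at most `s` of them fit), and split what is left, which has no
increasing subsequence longer than `s`, into `s` decreasing blocks by labelling each element with
the length of the longest increasing subsequence ending at it (Mirsky).
-/

open Finset

section

variable {n : ℕ} {π : Equiv.Perm (Fin n)}

theorem monoOn.mono {S A : Set (Fin n)} (h : monoOn π S) (hA : A ⊆ S) : monoOn π A :=
  h.imp (·.mono hA) (·.mono hA)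

theorem monoOn_of_subsingleton {S : Set (Fin n)} (h : S.Subsingleton) : monoOn π S :=
  Or.inl (h.strictMonoOn _)

/-- Colours are natural numbers so that an empty `S` has a partition into `0` blocks even when
`n > 0`. -/
def HasMonoPartition (π : Equiv.Perm (Fin n)) (S : Set (Fin n)) (m : ℕ) : Prop :=
  ∃ c : Fin n → ℕ, (∀ i ∈ S, c i < m) ∧ ∀ j, monoOn π {i | i ∈ S ∧ c i = j}

namespace HasMonoPartition

theorem of_monoOn {S : Set (Fin n)} (h : monoOn π S) : HasMonoPartition π S 1 :=
  ⟨fun _ => 0, fun _ _ => Nat.one_pos, fun _ => h.mono fun _ hi => hi.1⟩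

theorem mono_right {S : Set (Fin n)} {m m' : ℕ} (h : HasMonoPartition π S m) (hm : m ≤ m') :
    HasMonoPartition π S m' :=
  let ⟨c, hlt, hc⟩ := h
  ⟨c, fun i hi => (hlt i hi).trans_le hm, hc⟩

theorem subset {S S' : Set (Fin n)} {m : ℕ} (h : HasMonoPartition π S' m) (hS : S ⊆ S') :
    HasMonoPartition π S m :=
  let ⟨c, hlt, hc⟩ := h
  ⟨c, fun i hi => hlt i (hS hi), fun j => (hc j).mono fun _ hi => ⟨hS hi.1, hi.2⟩⟩

theorem union {S S' : Set (Fin n)} {a b : ℕ} (h : HasMonoPartition π S a)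
    (h' : HasMonoPartition π S' b) : HasMonoPartition π (S ∪ S') (a + b) := by
  classical
  obtain ⟨c, hlt, hc⟩ := h
  obtain ⟨c', hlt', hc'⟩ := h'
  refine ⟨fun i => if i ∈ S' then a + c' i else c i, ?_, fun j => ?_⟩
  · rintro i (hi | hi) <;> dsimp only <;> split_ifs <;> grind
  · by_cases hj : j < a
    · refine (hc j).mono ?_
      rintro i ⟨hi | hi, hij⟩ <;> dsimp only at hij <;> split_ifs at hij <;> grind
    · refine (hc' (j - a)).mono ?_
      rintro i ⟨hi | hi, hij⟩ <;> dsimp only at hij <;> split_ifs at hij <;> grind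

theorem of_finColoring {S : Set (Fin n)} {k : ℕ} (c : Fin n → Fin k)
    (hc : ∀ j, monoOn π {i | i ∈ S ∧ c i = j}) : HasMonoPartition π S k := by
  refine ⟨fun i => c i, fun i _ => (c i).2, fun j => ?_⟩
  by_cases hj : j < k
  · exact (hc ⟨j, hj⟩).mono fun i hi => ⟨hi.1, Fin.ext hi.2⟩
  · exact monoOn_of_subsingleton fun i hi => absurd (hi.2 ▸ (c i).2) hj

end HasMonoPartition

theorem optM_le_of_hasMonoPartition {m : ℕ} (h : HasMonoPartition π Set.univ m) :
    optM n π ≤ m :=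
  let ⟨c, hlt, hc⟩ := h
  Nat.sInf_le ⟨fun i => ⟨c i, hlt i trivial⟩,
    fun j => (hc j).mono fun _ hi => ⟨trivial, congrArg Fin.val hi⟩⟩

theorem optM_mem (π : Equiv.Perm (Fin n)) :
    optM n π ∈ {k : ℕ | ∃ c : Fin n → Fin k, ∀ j : Fin k, monoOn π {i | c i = j}} :=
  Nat.sInf_mem ⟨n, id, fun _ => monoOn_of_subsingleton fun _ hx _ hy => hx.trans hy.symm⟩

theorem optR_le_optM (π : Equiv.Perm (Fin n)) : optR n π ≤ optM n π :=
  have ⟨c, hc⟩ := optM_mem π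
  Nat.sInf_le ⟨c, fun j => ⟨∅, by simp, by simpa using hc j⟩⟩

theorem optR_mem (π : Equiv.Perm (Fin n)) :
    optR n π ∈ {k : ℕ | ∃ c : Fin n → Fin k, ∀ j : Fin k, ∃ D : Finset (Fin n),
      D.card ≤ 2 ∧ monoOn π ({i | c i = j} \ ↑D)} :=
  have ⟨c, hc⟩ := optM_mem π
  Nat.sInf_mem ⟨_, c, fun j => ⟨∅, by simp, by simpa using hc j⟩⟩

open Classical in
noncomputable def longestIncEndingAt (π : Equiv.Perm (Fin n)) (T : Finset (Fin n)) (i : Fin n) :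
    ℕ :=
  (T.powerset.filter fun t : Finset (Fin n) =>
    IsGreatest (t : Set (Fin n)) i ∧ StrictMonoOn π t).sup card

section Mirsky

variable (π) {T : Finset (Fin n)}

theorem card_le_longestIncEndingAt {i : Fin n} {t : Finset (Fin n)} (htT : t ⊆ T)
    (hti : IsGreatest (t : Set (Fin n)) i) (ht : StrictMonoOn π t) :
    t.card ≤ longestIncEndingAt π T i := by
  classical
  exact le_sup (f := card) (mem_filter.2 ⟨mem_powerset.2 htT, hti, ht⟩)

theorem exists_card_eq_longestIncEndingAt {i : Fin n} (hi : i ∈ T) :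
    ∃ t ⊆ T, IsGreatest (t : Set (Fin n)) i ∧ StrictMonoOn π t ∧
      t.card = longestIncEndingAt π T i := by
  classical
  have hne : (T.powerset.filter fun t : Finset (Fin n) =>
      IsGreatest (t : Set (Fin n)) i ∧ StrictMonoOn π t).Nonempty :=
    ⟨{i}, mem_filter.2 ⟨mem_powerset.2 (singleton_subset_iff.2 hi),
      by simp [isGreatest_singleton]⟩⟩
  obtain ⟨t, ht, heq⟩ := exists_mem_eq_sup _ hne card
  rw [mem_filter, mem_powerset] at ht
  exact ⟨t, ht.1, ht.2.1, ht.2.2, by rw [longestIncEndingAt, heq]⟩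

theorem one_le_longestIncEndingAt {i : Fin n} (hi : i ∈ T) : 1 ≤ longestIncEndingAt π T i :=
  card_le_longestIncEndingAt π (singleton_subset_iff.2 hi) (by simp [isGreatest_singleton])
    (by simp)

theorem longestIncEndingAt_le {s : ℕ} (h : ∀ t ⊆ T, StrictMonoOn π ↑t → t.card ≤ s)
    (i : Fin n) : longestIncEndingAt π T i ≤ s := by
  classical
  refine Finset.sup_le fun t ht => ?_
  rw [mem_filter, mem_powerset] at ht
  exact h t ht.1 ht.2.2

theorem longestIncEndingAt_lt {i j : Fin n} (hi : i ∈ T) (hj : j ∈ T) (hij : i < j)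
    (hπ : π i < π j) : longestIncEndingAt π T i < longestIncEndingAt π T j := by
  classical
  obtain ⟨t, htT, ⟨hit, hti⟩, htmono, heq⟩ := exists_card_eq_longestIncEndingAt π hi
  have hle : ∀ x ∈ (t : Set (Fin n)), x ≤ j := fun x hx => (hti hx).trans hij.le
  have hjt : j ∉ t := fun hjt => (hti hjt).not_gt hij
  have hins : IsGreatest (↑(insert j t) : Set (Fin n)) j ∧ StrictMonoOn π ↑(insert j t) := by
    rw [coe_insert, strictMonoOn_insert_iff_of_forall_le hle]
    refine ⟨⟨Set.mem_insert _ _, ?_⟩,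
      fun x hx _ => (htmono.monotoneOn hx hit (hti hx)).trans_lt hπ, htmono⟩
    rintro x (rfl | hx)
    exacts [le_rfl, hle x hx]
  calc longestIncEndingAt π T i = t.card := heq.symm
    _ < (insert j t).card := by rw [card_insert_of_notMem hjt]; omega
    _ ≤ longestIncEndingAt π T j :=
      card_le_longestIncEndingAt π (insert_subset hj htT) hins.1 hins.2

theorem hasMonoPartition_of_forall_card_le {s : ℕ}
    (h : ∀ t ⊆ T, StrictMonoOn π ↑t → t.card ≤ s) : HasMonoPartition π T s := by
  refine ⟨fun i => longestIncEndingAt π T i - 1, fun i hi => ?_, fun k => Or.inr ?_⟩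
  · have := one_le_longestIncEndingAt π hi
    have := longestIncEndingAt_le π h i
    dsimp only
    omega
  · rintro a ⟨ha, rfl⟩ b ⟨hb, hab_eq⟩ hab
    refine lt_of_not_ge fun hle => ?_
    have := longestIncEndingAt_lt π ha hb hab (hle.lt_of_ne (π.injective.ne hab.ne))
    have := one_le_longestIncEndingAt π ha
    dsimp only at hab_eq
    omega

end Mirsky

theorem hasMonoPartition_card_div (π : Equiv.Perm (Fin n)) (s : ℕ) (T : Finset (Fin n)) :
    HasMonoPartition π T (T.card / (s + 1) + s) := by
  classical
  induction T using Finset.strongInduction with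
  | H T ih =>
  by_cases hlong : ∃ t ⊆ T, StrictMonoOn π ↑t ∧ s < t.card
  · obtain ⟨t, htT, htmono, hst⟩ := hlong
    obtain ⟨M, hMt, hM⟩ := exists_subset_card_eq (n := s + 1) hst
    have hMT : M ⊆ T := hMt.trans htT
    have hrest := ih (T \ M) (sdiff_ssubset hMT (card_pos.1 (by omega)))
    have hcover : (T : Set (Fin n)) ⊆ ↑(T \ M) ∪ ↑M := by simp
    refine ((hrest.union (.of_monoOn (Or.inl (htmono.mono hMt)))).subset hcover).mono_right ?_
    have hdiv : T.card / (s + 1) = (T.card - (s + 1)) / (s + 1) + 1 :=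
      Nat.div_eq_sub_div s.succ_pos (hM.symm.trans_le (card_le_card hMT))
    rw [card_sdiff_of_subset hMT, hM]
    omega
  · simp only [not_exists, not_and, not_lt] at hlong
    exact (hasMonoPartition_of_forall_card_le π hlong).mono_right (Nat.le_add_left _ _)

theorem hasMonoPartition_of_card_le_mul_self (π : Equiv.Perm (Fin n)) {s : ℕ}
    {T : Finset (Fin n)} (h : T.card ≤ s * s) : HasMonoPartition π T (2 * s) :=
  (hasMonoPartition_card_div π s T).mono_right <| by
    have : T.card / (s + 1) ≤ s :=
      Nat.div_le_of_le_mul (h.trans (Nat.mul_le_mul_right _ s.le_succ))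
    omega

theorem le_ceil_sqrt_mul_self_s17 {x : ℝ} (hx : 0 ≤ x) : x ≤ ⌈√x⌉₊ * ⌈√x⌉₊ :=
  calc x = √x * √x := (Real.mul_self_sqrt hx).symm
    _ ≤ _ := mul_self_le_mul_self (Real.sqrt_nonneg x) (Nat.le_ceil _)

theorem optM_le_of_relaxed_coloring {k : ℕ} (c : Fin n → Fin k) (D : Fin k → Finset (Fin n))
    (hD : ∀ j, (D j).card ≤ 2) (hc : ∀ j, monoOn π ({i | c i = j} \ ↑(D j))) :
    optM n π ≤ k + 2 * ⌈√(2 * k)⌉₊ := by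
  classical
  set T := univ.biUnion D
  have hcore : HasMonoPartition π (↑T)ᶜ k :=
    .of_finColoring c fun j => (hc j).mono fun i ⟨hiT, hij⟩ =>
      ⟨hij, fun hiD => hiT (mem_biUnion.2 ⟨j, mem_univ _, hij ▸ hiD⟩)⟩
  have hT : T.card ≤ 2 * k :=
    card_biUnion_le.trans (by simpa [mul_comm] using sum_le_card_nsmul univ _ 2 fun j _ => hD j)
  have hsq : T.card ≤ ⌈√(2 * k)⌉₊ * ⌈√(2 * k)⌉₊ := by
    have := le_ceil_sqrt_mul_self_s17 (by positivity : (0 : ℝ) ≤ 2 * k)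
    exact_mod_cast (show (T.card : ℝ) ≤ 2 * k by exact_mod_cast hT).trans this
  apply optM_le_of_hasMonoPartition
  simpa using hcore.union (hasMonoPartition_of_card_le_mul_self π hsq)

end

/-- `optR π ≤ optM π ≤ optR π + 2⌈√(2·optR π)⌉`. -/
theorem stmt_17 (n : ℕ) (π : Equiv.Perm (Fin n)) :
    optR n π ≤ optM n π ∧
    optM n π ≤ optR n π + 2 * ⌈Real.sqrt (2 * optR n π)⌉₊ := by
  obtain ⟨c, hc⟩ := optR_mem π
  choose D hD hmono using hc
  exact ⟨optR_le_optM π, optM_le_of_relaxed_coloring c D hD hmono⟩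
end
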